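/- There exists a constant C > 0 such that for every pair of positive integers n, k with k ≤ n, there is a T-periodic C² function h : ℝ → ℝ, with T = π/(n+k), satisfying |h(φ)| ≤ 5kT, |h'(φ)| ≤ 5k, |h''(φ)| ≤ C k n for all φ, and h(φ) = -4k(φ - φ_m) whenever |φ - φ_m| ≤ T/5, where φ_m = mT for m ∈ ℤ. -/

import Mathlib

open Real Function intervalIntegral

/-! The slope profile `w = profileSlope` is a smooth `2π`-periodic function equal to `-4` near
`2πℤ`, with values in `[-4, 4]`, and its bump is normalised so that `w` has mean zero over a
period. Hence its primitive `P = profile` is `2π`-periodic, equals `-4θ` near `0`, and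
`|P| ≤ 8π`. With `c = 2(n + k)`, the rescaling `h φ = k / c * P (c φ)` has period `2π / c = T`,
slope `-4k` near every `mT`, `|h| ≤ 4kT`, `|h'| ≤ 4k`, and `|h''| = k c |w' (c φ)| ≤ 4 k n sup |w'|`.
-/

theorem Function.Periodic.deriv {𝕜 F : Type*} [NontriviallyNormedField 𝕜] [NormedAddCommGroup F]
    [NormedSpace 𝕜 F] {f : 𝕜 → F} {T : 𝕜} (hf : Periodic f T) : Periodic (deriv f) T :=
  fun x => by rw [← deriv_comp_add_const, hf.funext]

theorem Function.Periodic.exists_pos_norm_le {E : Type*} [SeminormedAddCommGroup E] {f : ℝ → E}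
    {T : ℝ} (hf : Periodic f T) (hT : T ≠ 0) (hcont : Continuous f) : ∃ M > 0, ∀ x, ‖f x‖ ≤ M := by
  obtain ⟨M, hM, hbound⟩ := (hf.isBounded_of_continuous hT hcont).exists_pos_norm_le
  exact ⟨M, hM, fun x => hbound _ (Set.mem_range_self x)⟩

theorem Function.Periodic.periodic_primitive {E : Type*} [NormedAddCommGroup E] [NormedSpace ℝ E]
    {f : ℝ → E} {T : ℝ} (hf : Periodic f T) (hcont : Continuous f) (hmean : ∫ x in 0..T, f x = 0) :
    Periodic (fun x => ∫ t in 0..x, f t) T := fun x => by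
  show ∫ t in 0..x + T, f t = ∫ t in 0..x, f t
  rw [← integral_add_adjacent_intervals (hcont.intervalIntegrable 0 x)
    (hcont.intervalIntegrable x (x + T)), hf.intervalIntegral_add_eq x 0, zero_add, hmean, add_zero]

lemma cos_two_pi_div_five_pos : 0 < cos (2 * π / 5) :=
  cos_pos_of_mem_Ioo ⟨by linarith [pi_pos], by linarith [pi_pos]⟩

noncomputable def cosCutoff (θ : ℝ) : ℝ := smoothTransition (1 - cos θ / cos (2 * π / 5))

lemma cosCutoff_eq_zero {θ : ℝ} (h : cos (2 * π / 5) ≤ cos θ) : cosCutoff θ = 0 :=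
  smoothTransition.zero_of_nonpos <| by rwa [sub_nonpos, one_le_div cos_two_pi_div_five_pos]

lemma cosCutoff_eq_one {θ : ℝ} (h : cos θ ≤ 0) : cosCutoff θ = 1 :=
  smoothTransition.one_of_one_le <| by
    linarith [div_nonpos_of_nonpos_of_nonneg h cos_two_pi_div_five_pos.le]

lemma contDiff_cosCutoff : ContDiff ℝ 1 cosCutoff :=
  smoothTransition.contDiff.comp (contDiff_const.sub (contDiff_cos.div_const _))

lemma cosCutoff_periodic : Periodic cosCutoff (2 * π) := fun θ => by
  simp only [cosCutoff, cos_add_two_pi]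

lemma pi_le_integral_cosCutoff : π ≤ ∫ θ in 0..2 * π, cosCutoff θ := by
  have hπ := pi_pos
  have hone : ∀ θ ∈ Set.uIcc (π / 2) (π + π / 2), cosCutoff θ = 1 := fun θ hθ => by
    rw [Set.uIcc_of_le (by linarith)] at hθ
    exact cosCutoff_eq_one (cos_nonpos_of_pi_div_two_le_of_le hθ.1 hθ.2)
  calc π = ∫ θ in π / 2..π + π / 2, cosCutoff θ := by simp [integral_congr hone]
    _ ≤ ∫ θ in 0..2 * π, cosCutoff θ :=
      integral_mono_interval (by positivity) (by linarith) (by linarith)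
        (Filter.Eventually.of_forall fun _ => smoothTransition.nonneg _)
        (contDiff_cosCutoff.continuous.intervalIntegrable _ _)

noncomputable def profileSlope (θ : ℝ) : ℝ :=
  8 * π / (∫ t in 0..2 * π, cosCutoff t) * cosCutoff θ - 4

lemma contDiff_profileSlope : ContDiff ℝ 1 profileSlope :=
  (contDiff_const.mul contDiff_cosCutoff).sub contDiff_const

lemma profileSlope_periodic : Periodic profileSlope (2 * π) := fun θ => by
  simp only [profileSlope, cosCutoff_periodic θ]

lemma integral_profileSlope : ∫ θ in 0..2 * π, profileSlope θ = 0 := by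
  have hI : (∫ t in 0..2 * π, cosCutoff t) ≠ 0 := (pi_pos.trans_le pi_le_integral_cosCutoff).ne'
  unfold profileSlope
  rw [integral_sub ((contDiff_const.mul contDiff_cosCutoff).continuous.intervalIntegrable _ _)
    intervalIntegrable_const, integral_const_mul, integral_const, div_mul_cancel₀ _ hI, smul_eq_mul]
  ring

lemma abs_profileSlope_le (θ : ℝ) : |profileSlope θ| ≤ 4 := by
  have hI := pi_le_integral_cosCutoff
  have hcoef : 8 * π / (∫ t in 0..2 * π, cosCutoff t) ≤ 8 := by
    rw [div_le_iff₀ (pi_pos.trans_le hI)]; nlinarith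
  have hcoef' : 0 ≤ 8 * π / (∫ t in 0..2 * π, cosCutoff t) :=
    div_nonneg (by positivity) (pi_pos.le.trans hI)
  have h0 := smoothTransition.nonneg (1 - cos θ / cos (2 * π / 5))
  have h1 := smoothTransition.le_one (1 - cos θ / cos (2 * π / 5))
  rw [profileSlope, cosCutoff, abs_le]
  constructor <;> nlinarith

lemma profileSlope_eq_neg_four {θ : ℝ} (h : |θ| ≤ 2 * π / 5) : profileSlope θ = -4 := by
  have hcos : cos (2 * π / 5) ≤ cos θ := by
    rw [← cos_abs θ]
    exact cos_le_cos_of_nonneg_of_le_pi (abs_nonneg θ) (by linarith [pi_pos]) h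
  simp [profileSlope, cosCutoff_eq_zero hcos]

noncomputable def profile (θ : ℝ) : ℝ := ∫ t in 0..θ, profileSlope t

lemma hasDerivAt_profile (θ : ℝ) : HasDerivAt profile (profileSlope θ) θ :=
  (contDiff_profileSlope.continuous.integral_hasStrictDerivAt 0 θ).hasDerivAt

lemma deriv_profile : deriv profile = profileSlope :=
  funext fun θ => (hasDerivAt_profile θ).deriv

lemma contDiff_profile : ContDiff ℝ 2 profile := by
  rw [show (2 : WithTop ℕ∞) = 1 + 1 from rfl, contDiff_succ_iff_deriv, deriv_profile]
  exact ⟨fun θ => (hasDerivAt_profile θ).differentiableAt, by simp, contDiff_profileSlope⟩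

lemma profile_periodic : Periodic profile (2 * π) :=
  profileSlope_periodic.periodic_primitive contDiff_profileSlope.continuous integral_profileSlope

lemma abs_profile_le (θ : ℝ) : |profile θ| ≤ 8 * π := by
  obtain ⟨y, hy, hθy⟩ := profile_periodic.exists_mem_Ico₀ two_pi_pos θ
  have := norm_integral_le_of_norm_le_const (a := 0) (b := y) (C := 4) (f := profileSlope)
    fun t _ => abs_profileSlope_le t
  rw [hθy, profile, ← Real.norm_eq_abs]
  calc _ ≤ 4 * |y - 0| := this
    _ ≤ 8 * π := by rw [sub_zero, abs_of_nonneg hy.1]; linarith [hy.2]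

lemma profile_eq_of_abs_le {θ : ℝ} (h : |θ| ≤ 2 * π / 5) : profile θ = -4 * θ := by
  have hslope : ∀ t ∈ Set.uIcc 0 θ, profileSlope t = -4 := fun t ht => by
    have := Set.abs_sub_left_of_mem_uIcc ht
    rw [sub_zero, sub_zero] at this
    exact profileSlope_eq_neg_four (this.trans h)
  simp [profile, integral_congr hslope, mul_comm]

noncomputable def scaledProfile (k c φ : ℝ) : ℝ := k / c * profile (c * φ)

section scaledProfile

variable (k : ℝ) {c : ℝ}

lemma scaledProfile_periodic : Periodic (scaledProfile k c) (2 * π / c) := by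
  have := (profile_periodic.const_mul c).comp (k / c * ·)
  rwa [inv_mul_eq_div] at this

lemma contDiff_scaledProfile (c : ℝ) : ContDiff ℝ 2 (scaledProfile k c) :=
  contDiff_const.mul (contDiff_profile.comp (contDiff_const.mul contDiff_id))

lemma deriv_scaledProfile (hc : c ≠ 0) :
    deriv (scaledProfile k c) = fun φ => k * profileSlope (c * φ) := by
  funext φ
  show deriv (fun φ => k / c * profile (c * φ)) φ = _
  rw [deriv_const_mul_field, deriv_comp_mul_left, deriv_profile, smul_eq_mul]
  field_simp

lemma deriv_deriv_scaledProfile (hc : c ≠ 0) :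
    deriv (deriv (scaledProfile k c)) = fun φ => k * c * deriv profileSlope (c * φ) := by
  funext φ
  rw [deriv_scaledProfile k hc, deriv_const_mul_field, deriv_comp_mul_left, smul_eq_mul, mul_assoc]

lemma abs_scaledProfile_le (hk : 0 ≤ k) (hc : 0 < c) (φ : ℝ) :
    |scaledProfile k c φ| ≤ 4 * k * (2 * π / c) := by
  rw [scaledProfile, abs_mul, abs_of_nonneg (div_nonneg hk hc.le)]
  calc k / c * |profile (c * φ)| ≤ k / c * (8 * π) := by gcongr; exact abs_profile_le _
    _ = 4 * k * (2 * π / c) := by ring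

lemma scaledProfile_eq (hc : 0 < c) (m : ℤ) {φ : ℝ} (h : |φ - m * (2 * π / c)| ≤ 2 * π / c / 5) :
    scaledProfile k c φ = -4 * k * (φ - m * (2 * π / c)) := by
  have hshift : c * φ - m * (2 * π) = c * (φ - m * (2 * π / c)) := by field_simp
  have hsmall : |c * φ - m * (2 * π)| ≤ 2 * π / 5 := by
    calc |c * φ - m * (2 * π)| = c * |φ - m * (2 * π / c)| := by
          rw [hshift, abs_mul, abs_of_pos hc]
      _ ≤ c * (2 * π / c / 5) := by gcongr
      _ = 2 * π / 5 := by field_simp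
  rw [scaledProfile, ← profile_periodic.sub_int_mul_eq m, profile_eq_of_abs_le hsmall, hshift]
  field_simp

end scaledProfile

theorem stmt_19 :
    ∃ C : ℝ, 0 < C ∧
      ∀ n k : ℕ, 1 ≤ k → k ≤ n →
        ∃ h : ℝ → ℝ,
          Function.Periodic h (π / ((n : ℝ) + k)) ∧
          ContDiff ℝ 2 h ∧
          (∀ φ : ℝ, |h φ| ≤ 5 * k * (π / ((n : ℝ) + k)) ∧
            |deriv h φ| ≤ 5 * k ∧
            |deriv (deriv h) φ| ≤ C * k * n) ∧
          (∀ m : ℤ, ∀ φ : ℝ, |φ - m * (π / ((n : ℝ) + k))| ≤ (π / ((n : ℝ) + k)) / 5 →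
            h φ = -4 * k * (φ - m * (π / ((n : ℝ) + k)))) := by
  obtain ⟨M, hM, hbound⟩ := profileSlope_periodic.deriv.exists_pos_norm_le two_pi_pos.ne'
    (contDiff_profileSlope.continuous_deriv le_rfl)
  refine ⟨4 * M, by positivity, fun n k hk hkn => ?_⟩
  have hk : (1 : ℝ) ≤ k := by exact_mod_cast hk
  have hkn : (k : ℝ) ≤ n := by exact_mod_cast hkn
  set c : ℝ := 2 * (n + k) with hc_def
  have hc : 0 < c := by positivity
  have hT : π / ((n : ℝ) + k) = 2 * π / c := by rw [hc_def]; field_simp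
  rw [hT]
  refine ⟨scaledProfile k c, scaledProfile_periodic k, contDiff_scaledProfile k c,
    fun φ => ⟨?_, ?_, ?_⟩, fun m φ => scaledProfile_eq k hc m⟩
  · exact (abs_scaledProfile_le k (by positivity) hc φ).trans (by gcongr; norm_num)
  · rw [deriv_scaledProfile k hc.ne', abs_mul, abs_of_nonneg (by positivity : (0 : ℝ) ≤ k)]
    calc k * |profileSlope (c * φ)| ≤ k * 4 := by gcongr; exact abs_profileSlope_le _
      _ ≤ 5 * k := by linarith
  · rw [deriv_deriv_scaledProfile k hc.ne', abs_mul, abs_of_pos (by positivity : (0 : ℝ) < k * c)]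
    calc k * c * |deriv profileSlope (c * φ)| ≤ k * (4 * n) * M := by
          gcongr
          · linarith
          · exact hbound _
      _ = 4 * M * k * n := by ring
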